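/- Positivity of the energy level on the Nehari manifold: Let N ≥ 3, s ∈ (0,1), α ∈ (0, N), ζ ∈ [0, Λ), and let 0 < θ_1 < θ_2 < ⋯ < θ_k < 2s with 2θ_k − θ_1 ∈ (0, 2s) (k ≥ 2 finite). Assume S_{ζ,α} > 0 and H_{ζ,θ_i} > 0 for each i = 1, …, k. Then there exists δ > 0 such that every u in the Nehari set 𝒩² — i.e., every u ∈ D^{s,2}(ℝ^N) with u ≠ 0, D_α(u) < ∞, ∫ |u|^{2*_{s,θ_i}}/|x|^{θ_i} dx < ∞ for each i, and ‖u‖_ζ² = D_α(u) + Σ_{i=1}^k ∫ |u|^{2*_{s,θ_i}}/|x|^{θ_i} dx — satisfies I_2(u) ≥ δ, where I_2(u) = (1/2)‖u‖_ζ² − (1/(2·2*_α)) D_α(u) − Σ_{i=1}^k (1/2*_{s,θ_i}) ∫ |u|^{2*_{s,θ_i}}/|x|^{θ_i} dx. -/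

import Mathlib

open MeasureTheory ENNReal

noncomputable section

abbrev Euc (N : ℕ) := EuclideanSpace ℝ (Fin N)

/-- Normalization constant of the fractional Laplacian. -/
def cNs (N : ℕ) (s : ℝ) : ℝ :=
  4 ^ s * Real.Gamma ((N : ℝ) / 2 + s) / (Real.pi ^ ((N : ℝ) / 2) * |Real.Gamma (-s)|)

/-- Squared Gagliardo seminorm ‖u‖_D². -/
def DnormSq (N : ℕ) (s : ℝ) (u : Euc N → ℝ) : ℝ≥0∞ :=
  ENNReal.ofReal (cNs N s / 2) *
    ∫⁻ x : Euc N, ∫⁻ y : Euc N,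
      ENNReal.ofReal (|u x - u y| ^ 2 / ‖x - y‖ ^ ((N : ℝ) + 2 * s))

/-- The double Riesz-energy D_α(u). -/
def RieszEnergy (N : ℕ) (s α : ℝ) (u : Euc N → ℝ) : ℝ≥0∞ :=
  ∫⁻ x : Euc N, ∫⁻ y : Euc N,
    ENNReal.ofReal (|u x| ^ ((2 * (N : ℝ) - α) / ((N : ℝ) - 2 * s)) *
      |u y| ^ ((2 * (N : ℝ) - α) / ((N : ℝ) - 2 * s)) / ‖x - y‖ ^ α)

/-- ∫ |u|^{2*_s}. -/
def sobInt (N : ℕ) (s : ℝ) (u : Euc N → ℝ) : ℝ≥0∞ :=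
  ∫⁻ x : Euc N, ENNReal.ofReal (|u x| ^ (2 * (N : ℝ) / ((N : ℝ) - 2 * s)))

/-- Hardy integral ∫ |u|²/|x|^{2s}. -/
def hardyInt (N : ℕ) (s : ℝ) (u : Euc N → ℝ) : ℝ≥0∞ :=
  ∫⁻ x : Euc N, ENNReal.ofReal (|u x| ^ 2 / ‖x‖ ^ (2 * s))

/-- Hardy–Sobolev integral ∫ |u|^{2*_{s,θ}}/|x|^θ. -/
def hsInt (N : ℕ) (s θ : ℝ) (u : Euc N → ℝ) : ℝ≥0∞ :=
  ∫⁻ x : Euc N, ENNReal.ofReal (|u x| ^ (2 * ((N : ℝ) - θ) / ((N : ℝ) - 2 * s)) / ‖x‖ ^ θ)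

/-- Morrey norm ‖u‖_{𝓛^{p,ϖ}}. -/
def morrey (N : ℕ) (p ϖ : ℝ) (u : Euc N → ℝ) : ℝ≥0∞ :=
  (⨆ (R : ℝ) (_ : 0 < R) (x : Euc N),
    ENNReal.ofReal (R ^ (ϖ - (N : ℝ))) *
      ∫⁻ y in Metric.ball x R, ENNReal.ofReal (|u y| ^ p)) ^ (1 / p)

/-- Membership in D^{s,2}(ℝ^N). -/
def memD (N : ℕ) (s : ℝ) (u : Euc N → ℝ) : Prop :=
  MemLp u (ENNReal.ofReal (2 * (N : ℝ) / ((N : ℝ) - 2 * s))) volume ∧ DnormSq N s u < ⊤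

/-- The best fractional Hardy constant Λ. -/
def LambdaC (N : ℕ) (s : ℝ) : ℝ :=
  4 ^ s * Real.Gamma (((N : ℝ) + 2 * s) / 4) ^ 2 / Real.Gamma (((N : ℝ) - 2 * s) / 4) ^ 2

/-- ‖u‖_ζ² = ‖u‖_D² − ζ ∫ |u|²/|x|^{2s}. -/
def zetaNormSq (N : ℕ) (s ζ : ℝ) (u : Euc N → ℝ) : ℝ :=
  (DnormSq N s u).toReal - ζ * (hardyInt N s u).toReal

/-- Best constant S_{ζ,α}. -/
def Sconst (N : ℕ) (s α ζ : ℝ) : ℝ :=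
  sInf { r : ℝ | ∃ u : Euc N → ℝ, memD N s u ∧ 0 < RieszEnergy N s α u ∧
    RieszEnergy N s α u < ⊤ ∧
    r = zetaNormSq N s ζ u /
      (RieszEnergy N s α u).toReal ^ (((N : ℝ) - 2 * s) / (2 * (N : ℝ) - α)) }

/-- Best constant H_{ζ,θ}. -/
def Hconst (N : ℕ) (s θ ζ : ℝ) : ℝ :=
  sInf { r : ℝ | ∃ u : Euc N → ℝ, memD N s u ∧ 0 < hsInt N s θ u ∧
    hsInt N s θ u < ⊤ ∧
    r = zetaNormSq N s ζ u /
      (hsInt N s θ u).toReal ^ (((N : ℝ) - 2 * s) / ((N : ℝ) - θ)) }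

end

/-- The energy functional I₂. -/
noncomputable def I2 (N : ℕ) (s α ζ : ℝ) (k : ℕ) (θ : Fin k → ℝ) (u : Euc N → ℝ) : ℝ :=
  1 / 2 * zetaNormSq N s ζ u
    - ((N : ℝ) - 2 * s) / (2 * (2 * (N : ℝ) - α)) * (RieszEnergy N s α u).toReal
    - ∑ i, ((N : ℝ) - 2 * s) / (2 * ((N : ℝ) - θ i)) * (hsInt N s (θ i) u).toReal

/-!
On the Nehari set, `t = ‖u‖_ζ²` equals the sum of the nonlinear terms `X_j`, and the Sobolev-type
inequalities defining `S_{ζ,α}` and `H_{ζ,θ_i}` give `X_j ≤ (t / C_j) ^ e_j` with exponents `e_j > 1`.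
Hence `t ≤ ∑ (t / C_j) ^ e_j`, which forces `t` away from `0`. Using the Nehari identity once more,
`I₂(u) = ∑ (1/2 - 1/(2 e_j)) X_j ≥ c t` for `c = min_j (1/2 - 1/(2 e_j)) > 0`.
-/

theorem exists_pos_forall_le {ι : Type*} [Finite ι] {f : ι → ℝ} (hf : ∀ i, 0 < f i) :
    ∃ c > 0, ∀ i, c ≤ f i := by
  cases isEmpty_or_nonempty ι
  · exact ⟨1, one_pos, isEmptyElim⟩
  · obtain ⟨i₀, hi₀⟩ := Finite.exists_min f
    exact ⟨f i₀, hf i₀, hi₀⟩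

theorem csInf_le_of_sInf_pos {S : Set ℝ} (h : 0 < sInf S) {r : ℝ} (hr : r ∈ S) :
    sInf S ≤ r := by
  by_cases hb : BddBelow S
  · exact csInf_le hb hr
  · rw [Real.sInf_of_not_bddBelow hb] at h
    exact absurd h (lt_irrefl 0)

theorem le_div_rpow_of_le_div_rpow_inv {C t X e : ℝ} (hC : 0 < C) (hX : 0 < X) (he : 0 < e)
    (h : C ≤ t / X ^ e⁻¹) : X ≤ (t / C) ^ e := by
  have hXe : 0 < X ^ e⁻¹ := Real.rpow_pos_of_pos hX _
  have h1 : X ^ e⁻¹ ≤ t / C := by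
    rw [le_div_iff₀ hC, mul_comm]
    exact (le_div_iff₀ hXe).1 h
  calc X = (X ^ e⁻¹) ^ e := by
        rw [← Real.rpow_mul hX.le, inv_mul_cancel₀ he.ne', Real.rpow_one]
    _ ≤ (t / C) ^ e := Real.rpow_le_rpow hXe.le h1 he.le

theorem div_rpow_lt_div_of_lt {C t K e : ℝ} (hC : 0 < C) (ht : 0 < t) (hK : 0 < K) (he : 1 < e)
    (hlt : t < (C ^ e / K) ^ (e - 1)⁻¹) : (t / C) ^ e < t / K := by
  have hCe : 0 < C ^ e := Real.rpow_pos_of_pos hC _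
  have hpow : t ^ (e - 1) < C ^ e / K := by
    calc t ^ (e - 1) < ((C ^ e / K) ^ (e - 1)⁻¹) ^ (e - 1) :=
          Real.rpow_lt_rpow ht.le hlt (by linarith)
      _ = C ^ e / K := by
          rw [← Real.rpow_mul (div_pos hCe hK).le, inv_mul_cancel₀ (by linarith), Real.rpow_one]
  have hsplit : t ^ e = t ^ (e - 1) * t := by
    rw [← Real.rpow_add_one ht.ne', sub_add_cancel]
  rw [Real.div_rpow ht.le hC.le, div_lt_div_iff₀ hCe hK, hsplit, mul_right_comm, mul_comm t]
  exact mul_lt_mul_of_pos_right ((lt_div_iff₀ hK).1 hpow) ht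

theorem exists_pos_le_of_le_sum_div_rpow {ι : Type*} [Fintype ι] {C e : ι → ℝ}
    (hC : ∀ i, 0 < C i) (he : ∀ i, 1 < e i) :
    ∃ t₀ > 0, ∀ t > 0, t ≤ ∑ i, (t / C i) ^ e i → t₀ ≤ t := by
  set K : ℝ := Fintype.card ι + 1
  have hK : 0 < K := by positivity
  obtain ⟨t₀, ht₀, ht₀_le⟩ := exists_pos_forall_le (f := fun i => (C i ^ e i / K) ^ (e i - 1)⁻¹)
    fun i => Real.rpow_pos_of_pos (div_pos (Real.rpow_pos_of_pos (hC i) _) hK) _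
  refine ⟨t₀, ht₀, fun t ht hsum => le_of_not_gt fun hlt => ?_⟩
  have hterm : ∀ i, (t / C i) ^ e i ≤ t / K := fun i =>
    (div_rpow_lt_div_of_lt (hC i) ht hK (he i) (hlt.trans_le (ht₀_le i))).le
  have hcard : (Fintype.card ι : ℝ) * (t / K) < t := by
    rw [mul_div_assoc', div_lt_iff₀ hK]
    linarith
  have := Finset.sum_le_card_nsmul Finset.univ _ _ fun i _ => hterm i
  rw [nsmul_eq_mul, Finset.card_univ] at this
  linarith

theorem exists_pos_le_sum_of_le_div_rpow_inv {ι : Type*} [Fintype ι] {C e : ι → ℝ}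
    (hC : ∀ i, 0 < C i) (he : ∀ i, 1 < e i) :
    ∃ δ > 0, ∀ X : ι → ℝ, (∀ i, 0 ≤ X i) → 0 < ∑ i, X i →
      (∀ i, 0 < X i → C i ≤ (∑ j, X j) / X i ^ (e i)⁻¹) →
      δ ≤ ∑ i, (1 / 2 - (e i)⁻¹ / 2) * X i := by
  obtain ⟨t₀, ht₀, ht₀_le⟩ := exists_pos_le_of_le_sum_div_rpow hC he
  obtain ⟨c, hc, hc_le⟩ := exists_pos_forall_le (f := fun i => 1 / 2 - (e i)⁻¹ / 2)
    fun i => by have := inv_lt_one_of_one_lt₀ (he i); linarith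
  refine ⟨c * t₀, mul_pos hc ht₀, fun X hX ht hsob => ?_⟩
  set t := ∑ i, X i
  have hX_le : ∀ i, X i ≤ (t / C i) ^ e i := fun i => by
    rcases (hX i).eq_or_lt with h0 | hpos
    · rw [← h0]
      exact Real.rpow_nonneg (div_nonneg ht.le (hC i).le) _
    · exact le_div_rpow_of_le_div_rpow_inv (hC i) hpos (by linarith [he i]) (hsob i hpos)
  have ht₀t : t₀ ≤ t := ht₀_le t ht (Finset.sum_le_sum fun i _ => hX_le i)
  calc c * t₀ ≤ c * t := mul_le_mul_of_nonneg_left ht₀t hc.le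
    _ = ∑ i, c * X i := Finset.mul_sum _ _ _
    _ ≤ ∑ i, (1 / 2 - (e i)⁻¹ / 2) * X i :=
        Finset.sum_le_sum fun i _ => mul_le_mul_of_nonneg_right (hc_le i) (hX i)

theorem lintegral_rpow_abs_div_norm_rpow_pos {E : Type*} [NormedAddCommGroup E]
    [MeasurableSpace E] [BorelSpace E] {μ : Measure E} [NullSingletonClass μ] {u : E → ℝ}
    (hu : AEMeasurable u μ) (hu0 : ¬ u =ᵐ[μ] 0) {p : ℝ} (hp : 0 < p) (θ : ℝ) :
    0 < ∫⁻ x, ENNReal.ofReal (|u x| ^ p / ‖x‖ ^ θ) ∂μ := by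
  refine pos_iff_ne_zero.2 fun heq => hu0 ?_
  have hm : AEMeasurable (fun x => ENNReal.ofReal (|u x| ^ p / ‖x‖ ^ θ)) μ := by
    fun_prop
  have hne : ∀ᵐ x ∂μ, x ≠ 0 := by
    rw [ae_iff]
    simp
  filter_upwards [(lintegral_eq_zero_iff' hm).1 heq, hne] with x hx hx0
  have hden : 0 < ‖x‖ ^ θ := Real.rpow_pos_of_pos (norm_pos_iff.2 hx0) θ
  have hnum : |u x| ^ p ≤ 0 := by
    have := ENNReal.ofReal_eq_zero.1 hx
    rwa [div_le_iff₀ hden, zero_mul] at this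
  have := (Real.rpow_eq_zero (abs_nonneg _) hp.ne').1
    (le_antisymm hnum (Real.rpow_nonneg (abs_nonneg _) _))
  simpa using this

theorem hsInt_pos {N : ℕ} [NeZero N] {s θ : ℝ} (hσ : 2 * s < N) (hθ : θ < N) {u : Euc N → ℝ}
    (hu : AEMeasurable u) (hu0 : ¬ u =ᵐ[volume] 0) : 0 < hsInt N s θ u :=
  lintegral_rpow_abs_div_norm_rpow_pos hu hu0 (div_pos (by linarith) (by linarith)) θ

section Nehari

variable (N : ℕ) (s α ζ : ℝ) {k : ℕ} (θ : Fin k → ℝ)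

/-- `none` indexes `D_α`, `some i` the `i`-th Hardy–Sobolev integral. -/
noncomputable def nehariTerm (u : Euc N → ℝ) : Option (Fin k) → ℝ
  | none => (RieszEnergy N s α u).toReal
  | some i => (hsInt N s (θ i) u).toReal

/-- Half the homogeneity degree of each nonlinear term: `2*_α` for `D_α`, `2*_{s,θ_i} / 2` for
the Hardy–Sobolev integrals. -/
noncomputable def nehariExp : Option (Fin k) → ℝ
  | none => (2 * (N : ℝ) - α) / ((N : ℝ) - 2 * s)
  | some i => ((N : ℝ) - θ i) / ((N : ℝ) - 2 * s)

noncomputable def nehariConst : Option (Fin k) → ℝ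
  | none => Sconst N s α ζ
  | some i => Hconst N s (θ i) ζ

variable {N s α ζ θ}

theorem nehariTerm_nonneg (u : Euc N → ℝ) (j : Option (Fin k)) : 0 ≤ nehariTerm N s α θ u j := by
  cases j <;> exact ENNReal.toReal_nonneg

theorem sum_nehariTerm (u : Euc N → ℝ) :
    ∑ j, nehariTerm N s α θ u j =
      (RieszEnergy N s α u).toReal + ∑ i, (hsInt N s (θ i) u).toReal :=
  Fintype.sum_option _

theorem one_lt_nehariExp (hσ : 2 * s < N) (hα : α < N + 2 * s) (hθ : ∀ i, θ i < 2 * s)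
    (j : Option (Fin k)) : 1 < nehariExp N s α θ j := by
  cases j with
  | none => exact (one_lt_div (by linarith)).2 (by linarith)
  | some i => exact (one_lt_div (by linarith)).2 (by linarith [hθ i])

theorem nehariConst_pos (hS : 0 < Sconst N s α ζ) (hH : ∀ i, 0 < Hconst N s (θ i) ζ)
    (j : Option (Fin k)) : 0 < nehariConst N s α ζ θ j := by
  cases j with
  | none => exact hS
  | some i => exact hH i

theorem nehariConst_le (hS : 0 < Sconst N s α ζ) (hH : ∀ i, 0 < Hconst N s (θ i) ζ)
    {u : Euc N → ℝ} (hu : memD N s u) {j : Option (Fin k)} (hj : 0 < nehariTerm N s α θ u j) :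
    nehariConst N s α ζ θ j ≤
      zetaNormSq N s ζ u / nehariTerm N s α θ u j ^ (nehariExp N s α θ j)⁻¹ := by
  have hC := nehariConst_pos hS hH j
  cases j <;> simp only [nehariConst, nehariExp, nehariTerm, inv_div, ENNReal.toReal_pos_iff]
      at hj hC ⊢ <;>
    exact csInf_le_of_sInf_pos hC ⟨u, hu, hj.1, hj.2, rfl⟩

theorem I2_eq_sum_nehariTerm {u : Euc N → ℝ}
    (hNeh : zetaNormSq N s ζ u = ∑ j, nehariTerm N s α θ u j) :
    I2 N s α ζ k θ u = ∑ j, (1 / 2 - (nehariExp N s α θ j)⁻¹ / 2) * nehariTerm N s α θ u j := by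
  rw [I2, hNeh, Fintype.sum_option, Fintype.sum_option]
  simp only [nehariExp, nehariTerm, inv_div, ← div_div]
  have hsum : ∑ i, (1 / 2 - ((N : ℝ) - 2 * s) / ((N : ℝ) - θ i) / 2) * (hsInt N s (θ i) u).toReal
      = 1 / 2 * ∑ i, (hsInt N s (θ i) u).toReal
        - ∑ i, ((N : ℝ) - 2 * s) / 2 / ((N : ℝ) - θ i) * (hsInt N s (θ i) u).toReal := by
    rw [Finset.mul_sum, ← Finset.sum_sub_distrib]
    exact Finset.sum_congr rfl fun i _ => by ring
  rw [hsum]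
  ring

end Nehari

/-- Positivity of the energy level on the Nehari manifold 𝒩². -/
theorem statement12 (N : ℕ) (hN : 3 ≤ N) (s α ζ : ℝ) (hs : 0 < s ∧ s < 1)
    (hα : 0 < α ∧ α < N)
    (k : ℕ) (hk : 2 ≤ k) (θ : Fin k → ℝ)
    (hθ2s : ∀ i, θ i < 2 * s)
    (hS : 0 < Sconst N s α ζ) (hH : ∀ i, 0 < Hconst N s (θ i) ζ) :
    ∃ δ : ℝ, 0 < δ ∧ ∀ u : Euc N → ℝ, memD N s u →
      ¬ u =ᵐ[volume] (fun _ => (0 : ℝ)) →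
      RieszEnergy N s α u < ⊤ → (∀ i, hsInt N s (θ i) u < ⊤) →
      zetaNormSq N s ζ u =
        (RieszEnergy N s α u).toReal + ∑ i, (hsInt N s (θ i) u).toReal →
      δ ≤ I2 N s α ζ k θ u := by
  have : NeZero N := ⟨by omega⟩
  have hσ : 2 * s < N := by
    have : (3 : ℝ) ≤ N := by exact_mod_cast hN
    linarith
  obtain ⟨δ, hδ, hδ_le⟩ := exists_pos_le_sum_of_le_div_rpow_inv (nehariConst_pos hS hH)
    (one_lt_nehariExp hσ (by linarith : α < N + 2 * s) hθ2s)
  refine ⟨δ, hδ, fun u hu hu0 _ hfin hNeh => ?_⟩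
  rw [← sum_nehariTerm] at hNeh
  rw [I2_eq_sum_nehariTerm hNeh]
  have i₀ : Fin k := ⟨0, by omega⟩
  have hterm_pos : 0 < nehariTerm N s α θ u (some i₀) :=
    ENNReal.toReal_pos (hsInt_pos hσ (by linarith [hθ2s i₀]) hu.1.1.aemeasurable hu0).ne'
      (hfin i₀).ne
  refine hδ_le _ (nehariTerm_nonneg u) ?_ fun j hj => hNeh ▸ nehariConst_le hS hH hu hj
  exact Finset.sum_pos' (fun j _ => nehariTerm_nonneg u j) ⟨_, Finset.mem_univ _, hterm_pos⟩
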